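/- arXiv:1105.0949 — 4 statements merged into one kernel-verified Lean document; each statement's English description precedes it below -/
import Mathlib

section
/- Let L(x) denote the 4×4 block matrix [[σ(x)⁻¹I₂, σ₁⁻¹R⊥], [−σ₁⁻¹R⊥, σ(x)⁻¹I₂]] (the translated tensor L_c at c = 1/σ₁), and let g := f₁σ₁(σ₁−σ₂)/(σ₁+σ₂) + 2σ₁σ₂/(σ₁+σ₂). For an integrable field J : Ω → ℝ⁴ the following are equivalent: (i) L(x)J(x) = (1/g)·[[I₂, R⊥],[−R⊥, I₂]]·⟨J⟩ for almost every x ∈ Ω; (ii) there exist real numbers a₁, a₂ such that L(x)J(x) = (a₁, a₂, −a₂, a₁)ᵀ for almost every x ∈ Ω. -/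
/-! Writing `s = σ(x)⁻¹` and `t = σ₁⁻¹`, the equation `L(x) J(x) = (a₁, a₂, -a₂, a₁)` forces
`J₀ + J₃ = w(x) a₁` and `J₁ - J₂ = w(x) a₂` with `w = 2 / (s + t)`, the harmonic mean of `σ(x)`
and `σ₁`. On a two-phase medium `w` is affine in `χ₁`, and its average over `Ω` is exactly `g`;
averaging therefore gives `[[I₂, R⊥], [-R⊥, I₂]] ⟨J⟩ = g (a₁, a₂, -a₂, a₁)`. The converse holds
because the range of `[[I₂, R⊥], [-R⊥, I₂]]` consists of vectors of the form `(a₁, a₂, -a₂, a₁)`. -/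

open MeasureTheory Matrix

noncomputable section

/-- Average of a scalar function over `Ω`. -/
def avg (Ω : Set (Fin 2 → ℝ)) (h : (Fin 2 → ℝ) → ℝ) : ℝ :=
  ((volume Ω).toReal)⁻¹ * ∫ x in Ω, h x

/-- The 4×4 block matrix `[[I₂, R⊥], [-R⊥, I₂]]`. -/
def blockIRperp : Matrix (Fin 4) (Fin 4) ℝ :=
  !![1, 0, 0, 1;
     0, 1, -1, 0;
     0, -1, 1, 0;
     1, 0, 0, 1]

lemma smul_blockIRperp_mulVec (c : ℝ) (u : Fin 4 → ℝ) :
    c • (blockIRperp *ᵥ u) =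
      ![c * (u 0 + u 3), c * (u 1 - u 2), -(c * (u 1 - u 2)), c * (u 0 + u 3)] := by
  ext i
  fin_cases i <;> simp [blockIRperp, dotProduct, Fin.sum_univ_four, sub_eq_add_neg]
  ring

lemma add_and_sub_eq_of_mulVec_eq {s t a₁ a₂ : ℝ} {j : Fin 4 → ℝ} (hst : s + t ≠ 0)
    (h : !![s, 0, 0, t; 0, s, -t, 0; 0, -t, s, 0; t, 0, 0, s] *ᵥ j = ![a₁, a₂, -a₂, a₁]) :
    j 0 + j 3 = 2 / (s + t) * a₁ ∧ j 1 - j 2 = 2 / (s + t) * a₂ := by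
  have h0 := congrFun h 0
  have h1 := congrFun h 1
  have h2 := congrFun h 2
  have h3 := congrFun h 3
  simp only [mulVec, dotProduct, Fin.isValue, of_apply, cons_val', cons_val_fin_one, cons_val_zero,
    Fin.sum_univ_four, cons_val_one, zero_mul, add_zero, cons_val, Nat.succ_eq_add_one, Nat.reduceAdd,
    zero_add, neg_mul] at h0 h1 h2 h3
  constructor <;> field_simp
  · linear_combination h0 + h3
  · linear_combination h1 - h2

lemma two_div_inv_add_inv_two_phase {σ₁ σ₂ χ : ℝ} (hσ₁ : 0 < σ₁) (hσ₂ : 0 < σ₂)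
    (hχ : χ = 0 ∨ χ = 1) :
    2 / ((σ₁ * χ + σ₂ * (1 - χ))⁻¹ + σ₁⁻¹) =
      2 * σ₁ * σ₂ / (σ₁ + σ₂) + (σ₁ - 2 * σ₁ * σ₂ / (σ₁ + σ₂)) * χ := by
  rcases hχ with rfl | rfl <;> field_simp <;> ring

lemma isFiniteMeasure_restrict_of_toReal_pos {α : Type*} [MeasurableSpace α] {μ : Measure α}
    {s : Set α} (hs : 0 < (μ s).toReal) : IsFiniteMeasure (μ.restrict s) :=
  isFiniteMeasure_restrict.mpr (ENNReal.toReal_pos_iff.mp hs).2.ne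

lemma integrable_of_mem_zero_one {α : Type*} [MeasurableSpace α] {μ : Measure α}
    [IsFiniteMeasure μ] {f : α → ℝ} (hf : Measurable f) (h01 : ∀ x, f x = 0 ∨ f x = 1) :
    Integrable f μ := by
  refine .of_bound hf.aestronglyMeasurable 1 (.of_forall fun x => ?_)
  rcases h01 x with hx | hx <;> simp [hx]

section Average

variable {Ω : Set (Fin 2 → ℝ)} {f h : (Fin 2 → ℝ) → ℝ}

lemma avg_congr_ae (hfh : f =ᵐ[volume.restrict Ω] h) : avg Ω f = avg Ω h := by
  rw [avg, avg, integral_congr_ae hfh]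

lemma avg_add (hf : Integrable f (volume.restrict Ω)) (hh : Integrable h (volume.restrict Ω)) :
    avg Ω (fun x => f x + h x) = avg Ω f + avg Ω h := by
  rw [avg, avg, avg, integral_add hf hh, mul_add]

lemma avg_sub (hf : Integrable f (volume.restrict Ω)) (hh : Integrable h (volume.restrict Ω)) :
    avg Ω (fun x => f x - h x) = avg Ω f - avg Ω h := by
  rw [avg, avg, avg, integral_sub hf hh, mul_sub]

lemma avg_mul_const (c : ℝ) : avg Ω (fun x => f x * c) = avg Ω f * c := by
  rw [avg, avg, integral_mul_const, mul_assoc]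

lemma avg_nonneg (hf : ∀ x, 0 ≤ f x) : 0 ≤ avg Ω f :=
  mul_nonneg (by positivity) (integral_nonneg hf)

lemma avg_const_add_mul (hΩ : 0 < (volume Ω).toReal) (hf : Integrable f (volume.restrict Ω))
    (c d : ℝ) : avg Ω (fun x => c + d * f x) = c + d * avg Ω f := by
  have := isFiniteMeasure_restrict_of_toReal_pos hΩ
  rw [avg, avg, integral_add (integrable_const c) (hf.const_mul d), integral_const,
    integral_const_mul, measureReal_restrict_apply_univ, measureReal_def, smul_eq_mul]
  field_simp

end Average

theorem lower_bound_attainability_equiv_general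
    (Ω : Set (Fin 2 → ℝ)) (hΩpos : 0 < (volume Ω).toReal)
    (χ₁ : (Fin 2 → ℝ) → ℝ) (hχmeas : Measurable χ₁)
    (hχ01 : ∀ x, χ₁ x = 0 ∨ χ₁ x = 1)
    (σ₁ σ₂ : ℝ) (hσ₂ : 0 < σ₂) (hσ : σ₂ < σ₁)
    (σ : (Fin 2 → ℝ) → ℝ)
    (hσdef : ∀ x, σ x = σ₁ * χ₁ x + σ₂ * (1 - χ₁ x))
    (f₁ : ℝ) (hf₁ : f₁ = avg Ω χ₁)
    -- `L x` is the translated tensor `L_c` at `c = 1/σ₁`: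
    -- the block matrix `[[σ(x)⁻¹ I₂, σ₁⁻¹ R⊥], [-σ₁⁻¹ R⊥, σ(x)⁻¹ I₂]]`
    (L : (Fin 2 → ℝ) → Matrix (Fin 4) (Fin 4) ℝ)
    (hL : ∀ x, L x = !![(σ x)⁻¹, 0, 0, σ₁⁻¹;
                        0, (σ x)⁻¹, -σ₁⁻¹, 0;
                        0, -σ₁⁻¹, (σ x)⁻¹, 0;
                        σ₁⁻¹, 0, 0, (σ x)⁻¹])
    (g : ℝ) (hg : g = f₁ * σ₁ * (σ₁ - σ₂) / (σ₁ + σ₂) + 2 * σ₁ * σ₂ / (σ₁ + σ₂))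
    (J : (Fin 2 → ℝ) → (Fin 4 → ℝ))
    (hJint : ∀ i : Fin 4, Integrable (fun x => J x i) (volume.restrict Ω))
    (avgJ : Fin 4 → ℝ) (havgJ : ∀ i, avgJ i = avg Ω (fun x => J x i)) :
    (∀ᵐ x ∂(volume.restrict Ω),
        (L x).mulVec (J x) = g⁻¹ • blockIRperp.mulVec avgJ) ↔
    (∃ a₁ a₂ : ℝ, ∀ᵐ x ∂(volume.restrict Ω),
        (L x).mulVec (J x) = ![a₁, a₂, -a₂, a₁]) := by
  simp only [smul_blockIRperp_mulVec]
  refine ⟨fun h => ⟨_, _, h⟩, fun ⟨a₁, a₂, h⟩ => ?_⟩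
  have hσ₁ : 0 < σ₁ := hσ₂.trans hσ
  have hσ_pos : ∀ x, 0 < σ x := fun x => by
    rcases hχ01 x with hx | hx <;> simp [hσdef, hx, hσ₁, hσ₂]
  set w : (Fin 2 → ℝ) → ℝ := fun x => 2 / ((σ x)⁻¹ + σ₁⁻¹)
  have := isFiniteMeasure_restrict_of_toReal_pos hΩpos
  have havg_w : avg Ω w = g := by
    simp only [w, hσdef, two_div_inv_add_inv_two_phase hσ₁ hσ₂ (hχ01 _)]
    rw [avg_const_add_mul hΩpos (integrable_of_mem_zero_one hχmeas hχ01), ← hf₁, hg]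
    field_simp
    ring
  have hg_pos : 0 < g := by
    have hf₁_nonneg : 0 ≤ f₁ :=
      hf₁ ▸ avg_nonneg fun x => by rcases hχ01 x with hx | hx <;> simp [hx]
    have hσ_gap : 0 < σ₁ - σ₂ := sub_pos.mpr hσ
    rw [hg]
    positivity
  have hJw : ∀ᵐ x ∂(volume.restrict Ω), J x 0 + J x 3 = w x * a₁ ∧ J x 1 - J x 2 = w x * a₂ := by
    filter_upwards [h] with x hx
    rw [hL] at hx
    exact add_and_sub_eq_of_mulVec_eq (add_pos (inv_pos.2 (hσ_pos x)) (inv_pos.2 hσ₁)).ne' hx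
  have h03 : avgJ 0 + avgJ 3 = g * a₁ := by
    rw [havgJ, havgJ, ← avg_add (hJint 0) (hJint 3), avg_congr_ae (hJw.mono fun x hx => hx.1),
      avg_mul_const, havg_w]
  have h12 : avgJ 1 - avgJ 2 = g * a₂ := by
    rw [havgJ, havgJ, ← avg_sub (hJint 1) (hJint 2), avg_congr_ae (hJw.mono fun x hx => hx.2),
      avg_mul_const, havg_w]
  filter_upwards [h] with x hx
  rw [hx, h03, h12, inv_mul_cancel_left₀ hg_pos.ne', inv_mul_cancel_left₀ hg_pos.ne']

/-- Equivalence of the two forms of the attainability condition for the translation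
lower bound (Theorem 3.1 of the paper). -/
theorem lower_bound_attainability_equiv
    (Ω : Set (Fin 2 → ℝ)) (hΩmeas : MeasurableSet Ω)
    (hΩbdd : Bornology.IsBounded Ω) (hΩpos : 0 < (volume Ω).toReal)
    (χ₁ : (Fin 2 → ℝ) → ℝ) (hχmeas : Measurable χ₁)
    (hχ01 : ∀ x, χ₁ x = 0 ∨ χ₁ x = 1)
    (σ₁ σ₂ : ℝ) (hσ₂ : 0 < σ₂) (hσ : σ₂ < σ₁)
    (σ : (Fin 2 → ℝ) → ℝ)
    (hσdef : ∀ x, σ x = σ₁ * χ₁ x + σ₂ * (1 - χ₁ x))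
    (f₁ : ℝ) (hf₁ : f₁ = avg Ω χ₁)
    -- `L x` is the translated tensor `L_c` at `c = 1/σ₁`:
    -- the block matrix `[[σ(x)⁻¹ I₂, σ₁⁻¹ R⊥], [-σ₁⁻¹ R⊥, σ(x)⁻¹ I₂]]`
    (L : (Fin 2 → ℝ) → Matrix (Fin 4) (Fin 4) ℝ)
    (hL : ∀ x, L x = !![(σ x)⁻¹, 0, 0, σ₁⁻¹;
                        0, (σ x)⁻¹, -σ₁⁻¹, 0;
                        0, -σ₁⁻¹, (σ x)⁻¹, 0;
                        σ₁⁻¹, 0, 0, (σ x)⁻¹])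
    (g : ℝ) (hg : g = f₁ * σ₁ * (σ₁ - σ₂) / (σ₁ + σ₂) + 2 * σ₁ * σ₂ / (σ₁ + σ₂))
    (J : (Fin 2 → ℝ) → (Fin 4 → ℝ))
    (hJint : ∀ i : Fin 4, Integrable (fun x => J x i) (volume.restrict Ω))
    (avgJ : Fin 4 → ℝ) (havgJ : ∀ i, avgJ i = avg Ω (fun x => J x i)) :
    (∀ᵐ x ∂(volume.restrict Ω),
        (L x).mulVec (J x) = g⁻¹ • blockIRperp.mulVec avgJ) ↔
    (∃ a₁ a₂ : ℝ, ∀ᵐ x ∂(volume.restrict Ω),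
        (L x).mulVec (J x) = ![a₁, a₂, -a₂, a₁]) :=
  lower_bound_attainability_equiv_general Ω hΩpos χ₁ hχmeas hχ01 σ₁ σ₂ hσ₂ hσ σ hσdef f₁ hf₁ L hL g
    hg J hJint avgJ havgJ
end
end

section
/- Let Ω ⊆ ℝ² be open, P ⊆ Ω open (the phase-1 region), Q := Ω ∖ closure(P) (the phase-2 region), and σ₁ > σ₂ > 0. Suppose V, W : Ω → ℝ are continuous, differentiable at every point of P ∪ Q, and satisfy σ₁∇V = σ₂R⊥∇W on P and ∇V = R⊥∇W on Q (this encodes the conductivity equation ∇·σ∇V = 0 with flux potential W, i.e. −σ∇V = −σ₂R⊥∇W with σ = σ₁ on P and σ = σ₂ on Q). Assume the field is uniform in phase 1: ∇V ≡ (−e₁, −e₂) on P for constants e₁, e₂. Define V'(x,y) := −W(x,y) + (σ₁/σ₂ + 1)(e₂x − e₁y) and W'(x,y) := V(x,y) + (σ₁/σ₂ + 1)(e₁x + e₂y). Then V', W' are continuous on Ω, differentiable on P ∪ Q, satisfy σ₁∇V' = σ₂R⊥∇W' on P and ∇V' = R⊥∇W' on Q, and at every point of P ∪ Q the 4-vector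 [[σI₂, σ₂R⊥],[−σ₂R⊥, σI₂]]·(−∇V, −∇V')ᵀ equals (σ₁+σ₂)·(e₁, e₂, −e₂, e₁)ᵀ; i.e., the pair (V, V') satisfies the attainability condition for the upper bound on the volume fraction. -/
/-!
`V'` and `W'` differ from `-W` and `V` by linear functions, so they inherit continuity and
differentiability, and their gradients are those of `-W` and `V` shifted by constants. With
`c = σ₁/σ₂ + 1`, so that `σ₁ = σ₂ (c - 1)`: in phase 1 the uniform field `∇V = -e` forces
`∇W = (c - 1) (e₂, -e₁)`, hence `∇V' = (e₂, -e₁)` is uniform as well, and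
`(-∇V, -∇V') = (e₁, e₂, -e₂, e₁)` is an eigenvector of `Lblock σ₁ σ₂` with eigenvalue `σ₁ + σ₂`.
In phase 2, `∇V = R⊥∇W` makes `(-∇V, -∇V')` equal to a vector `(a, b, b, -a)`, which
`Lblock σ₂ σ₂` annihilates, plus `c (0, 0, -e₂, e₁)`, which it maps to `σ₂ c (e₁, e₂, -e₂, e₁)`.
-/

open Matrix InnerProductSpace RealInnerProductSpace

noncomputable section

/-- The 4×4 block matrix `[[s I₂, σ₂ R⊥], [-σ₂ R⊥, s I₂]]`. -/
def Lblock (s σ₂ : ℝ) : Matrix (Fin 4) (Fin 4) ℝ :=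
  !![s, 0, 0, σ₂;
     0, s, -σ₂, 0;
     0, -σ₂, s, 0;
     σ₂, 0, 0, s]

theorem HasGradientAt.const_mul_add_inner {F : Type*} [NormedAddCommGroup F]
    [InnerProductSpace ℝ F] [CompleteSpace F] {f : F → ℝ} {f' x : F}
    (hf : HasGradientAt f f' x) (s : ℝ) (a : F) :
    HasGradientAt (fun p => s * f p + ⟪a, p⟫) (s • f' + a) x := by
  rw [hasGradientAt_iff_hasFDerivAt] at hf ⊢
  rw [map_add, map_smul]
  exact (hf.const_mul s).add (innerSL ℝ a).hasFDerivAt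

namespace EuclideanSpace

theorem inner_toLp_pair (a b : ℝ) (p : EuclideanSpace ℝ (Fin 2)) :
    ⟪!₂[a, b], p⟫ = a * p 0 + b * p 1 := by
  simp [PiLp.inner_apply, Fin.sum_univ_two, mul_comm]

variable {f g : EuclideanSpace ℝ (Fin 2) → ℝ} {s a b : ℝ}

theorem continuousOn_of_eq_affine {Ω : Set (EuclideanSpace ℝ (Fin 2))} (hg : ContinuousOn g Ω)
    (hf : ∀ p, f p = s * g p + (a * p 0 + b * p 1)) : ContinuousOn f Ω := by
  rw [funext hf]
  fun_prop

theorem gradient_apply_of_eq_affine {x : EuclideanSpace ℝ (Fin 2)} (hg : DifferentiableAt ℝ g x)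
    (hf : ∀ p, f p = s * g p + (a * p 0 + b * p 1)) :
    DifferentiableAt ℝ f x ∧ gradient f x 0 = s * gradient g x 0 + a ∧
      gradient f x 1 = s * gradient g x 1 + b := by
  have hfg : HasGradientAt f (s • gradient g x + !₂[a, b]) x := by
    rw [show f = fun p => s * g p + ⟪!₂[a, b], p⟫ from funext fun p => by
      rw [hf, inner_toLp_pair]]
    exact hg.hasGradientAt.const_mul_add_inner s _
  rw [hfg.gradient]
  exact ⟨hfg.differentiableAt, by simp, by simp⟩

end EuclideanSpace

theorem Lblock_mulVec (s σ₂ x₀ x₁ x₂ x₃ : ℝ) :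
    Lblock s σ₂ *ᵥ ![x₀, x₁, x₂, x₃] =
      ![s * x₀ + σ₂ * x₃, s * x₁ - σ₂ * x₂, s * x₂ - σ₂ * x₁, s * x₃ + σ₂ * x₀] := by
  ext i
  fin_cases i <;> simp [Lblock, mulVec, dotProduct, Fin.sum_univ_four, sub_eq_add_neg, add_comm]

theorem Lblock_mulVec_uniform (s σ₂ e₁ e₂ : ℝ) :
    Lblock s σ₂ *ᵥ ![e₁, e₂, -e₂, e₁] = (s + σ₂) • ![e₁, e₂, -e₂, e₁] := by
  simp only [Lblock_mulVec, smul_cons, smul_eq_mul, smul_empty]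
  ring_nf

theorem Lblock_self_mulVec {s c e₁ e₂ v₀ v₁ u₀ u₁ : ℝ}
    (hu₀ : u₀ = v₁ + c * e₂) (hu₁ : u₁ = -(v₀ + c * e₁)) :
    Lblock s s *ᵥ ![-v₀, -v₁, -u₀, -u₁] = (s * c) • ![e₁, e₂, -e₂, e₁] := by
  simp only [Lblock_mulVec, smul_cons, smul_eq_mul, smul_empty, hu₀, hu₁]
  ring_nf

section PhaseAlgebra

/- `v`, `w`, `v'`, `w'` stand for the coordinates of `∇V`, `∇W`, `∇V'`, `∇W'` at a point. -/

variable {σ₁ σ₂ c e₁ e₂ v₀ v₁ w₀ w₁ v'₀ v'₁ w'₀ w'₁ : ℝ}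

theorem conductivity_and_attainability_phase_one (hσ₂ : σ₂ ≠ 0) (hσ₁ : σ₁ = σ₂ * (c - 1))
    (hCR : σ₁ * v₀ = σ₂ * w₁ ∧ σ₁ * v₁ = -(σ₂ * w₀)) (hv : v₀ = -e₁ ∧ v₁ = -e₂)
    (hv' : v'₀ = -1 * w₀ + c * e₂ ∧ v'₁ = -1 * w₁ + -(c * e₁))
    (hw' : w'₀ = 1 * v₀ + c * e₁ ∧ w'₁ = 1 * v₁ + c * e₂) :
    (σ₁ * v'₀ = σ₂ * w'₁ ∧ σ₁ * v'₁ = -(σ₂ * w'₀)) ∧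
      Lblock σ₁ σ₂ *ᵥ ![-v₀, -v₁, -v'₀, -v'₁] = (σ₁ + σ₂) • ![e₁, e₂, -e₂, e₁] := by
  obtain ⟨hv₀, hv₁⟩ := hv
  obtain ⟨hCR₀, hCR₁⟩ := hCR
  rw [hσ₁, hv₀] at hCR₀
  rw [hσ₁, hv₁] at hCR₁
  have hw₀ : w₀ = (c - 1) * e₂ := mul_left_cancel₀ hσ₂ (by linear_combination hCR₁)
  have hw₁ : w₁ = -((c - 1) * e₁) := mul_left_cancel₀ hσ₂ (by linear_combination -hCR₀)
  have hv'₀ : v'₀ = e₂ := by linear_combination hv'.1 - hw₀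
  have hv'₁ : v'₁ = -e₁ := by linear_combination hv'.2 - hw₁
  refine ⟨⟨?_, ?_⟩, ?_⟩
  · rw [hσ₁, hv'₀, hw'.2, hv₁]
    ring
  · rw [hσ₁, hv'₁, hw'.1, hv₀]
    ring
  · rw [hv₀, hv₁, hv'₀, hv'₁, neg_neg, neg_neg, Lblock_mulVec_uniform]

theorem conductivity_and_attainability_phase_two (hσ₁ : σ₁ = σ₂ * (c - 1))
    (hCR : v₀ = w₁ ∧ v₁ = -w₀)
    (hv' : v'₀ = -1 * w₀ + c * e₂ ∧ v'₁ = -1 * w₁ + -(c * e₁))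
    (hw' : w'₀ = 1 * v₀ + c * e₁ ∧ w'₁ = 1 * v₁ + c * e₂) :
    (v'₀ = w'₁ ∧ v'₁ = -w'₀) ∧
      Lblock σ₂ σ₂ *ᵥ ![-v₀, -v₁, -v'₀, -v'₁] = (σ₁ + σ₂) • ![e₁, e₂, -e₂, e₁] := by
  have hv'₀ : v'₀ = v₁ + c * e₂ := by linear_combination hv'.1 - hCR.2
  have hv'₁ : v'₁ = -(v₀ + c * e₁) := by linear_combination hv'.2 + hCR.1
  refine ⟨⟨by linear_combination hv'₀ - hw'.2, by linear_combination hv'₁ + hw'.1⟩, ?_⟩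
  rw [Lblock_self_mulVec hv'₀ hv'₁, hσ₁]
  congr 1
  ring

end PhaseAlgebra

theorem uniform_field_gives_upper_bound_attainability_general
    (Ω P : Set (EuclideanSpace ℝ (Fin 2)))
    (Q : Set (EuclideanSpace ℝ (Fin 2)))
    (σ₁ σ₂ : ℝ) (hσ₂ : 0 < σ₂)
    (σ : EuclideanSpace ℝ (Fin 2) → ℝ)
    (hσP : ∀ x ∈ P, σ x = σ₁) (hσQ : ∀ x ∈ Q, σ x = σ₂)
    (V W : EuclideanSpace ℝ (Fin 2) → ℝ)
    (hVcont : ContinuousOn V Ω) (hWcont : ContinuousOn W Ω)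
    (hVdiff : ∀ x ∈ P ∪ Q, DifferentiableAt ℝ V x)
    (hWdiff : ∀ x ∈ P ∪ Q, DifferentiableAt ℝ W x)
    -- `σ₁ ∇V = σ₂ R⊥ ∇W` on `P`
    (hCRP : ∀ x ∈ P, σ₁ * gradient V x 0 = σ₂ * gradient W x 1 ∧
                     σ₁ * gradient V x 1 = -(σ₂ * gradient W x 0))
    -- `∇V = R⊥ ∇W` on `Q`
    (hCRQ : ∀ x ∈ Q, gradient V x 0 = gradient W x 1 ∧
                     gradient V x 1 = -(gradient W x 0))
    -- the field `-∇V` is uniform, equal to `(e₁, e₂)`, in phase 1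
    (e₁ e₂ : ℝ)
    (hunif : ∀ x ∈ P, gradient V x 0 = -e₁ ∧ gradient V x 1 = -e₂)
    (V' W' : EuclideanSpace ℝ (Fin 2) → ℝ)
    (hV' : ∀ p, V' p = -W p + (σ₁ / σ₂ + 1) * (e₂ * p 0 - e₁ * p 1))
    (hW' : ∀ p, W' p = V p + (σ₁ / σ₂ + 1) * (e₁ * p 0 + e₂ * p 1)) :
    ContinuousOn V' Ω ∧ ContinuousOn W' Ω ∧
    (∀ x ∈ P ∪ Q, DifferentiableAt ℝ V' x) ∧
    (∀ x ∈ P ∪ Q, DifferentiableAt ℝ W' x) ∧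
    (∀ x ∈ P, σ₁ * gradient V' x 0 = σ₂ * gradient W' x 1 ∧
              σ₁ * gradient V' x 1 = -(σ₂ * gradient W' x 0)) ∧
    (∀ x ∈ Q, gradient V' x 0 = gradient W' x 1 ∧
              gradient V' x 1 = -(gradient W' x 0)) ∧
    (∀ x ∈ P ∪ Q,
      (Lblock (σ x) σ₂).mulVec
        ![-(gradient V x 0), -(gradient V x 1), -(gradient V' x 0), -(gradient V' x 1)] =
      (σ₁ + σ₂) • ![e₁, e₂, -e₂, e₁]) := by
  set c := σ₁ / σ₂ + 1 with hc
  have hσ₁ : σ₁ = σ₂ * (c - 1) := by rw [hc]; field_simp; ring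
  have hV'eq (p : EuclideanSpace ℝ (Fin 2)) :
      V' p = -1 * W p + (c * e₂ * p 0 + -(c * e₁) * p 1) := by
    rw [hV']; ring
  have hW'eq (p : EuclideanSpace ℝ (Fin 2)) :
      W' p = 1 * V p + (c * e₁ * p 0 + c * e₂ * p 1) := by
    rw [hW']; ring
  have hV'at x (hx : x ∈ P ∪ Q) :=
    EuclideanSpace.gradient_apply_of_eq_affine (hWdiff x hx) hV'eq
  have hW'at x (hx : x ∈ P ∪ Q) :=
    EuclideanSpace.gradient_apply_of_eq_affine (hVdiff x hx) hW'eq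
  have hPhase₁ x (hx : x ∈ P) := conductivity_and_attainability_phase_one hσ₂.ne' hσ₁ (hCRP x hx)
    (hunif x hx) (hV'at x (.inl hx)).2 (hW'at x (.inl hx)).2
  have hPhase₂ x (hx : x ∈ Q) := conductivity_and_attainability_phase_two hσ₁ (hCRQ x hx)
    (hV'at x (.inr hx)).2 (hW'at x (.inr hx)).2
  refine ⟨EuclideanSpace.continuousOn_of_eq_affine hWcont hV'eq,
    EuclideanSpace.continuousOn_of_eq_affine hVcont hW'eq,
    fun x hx => (hV'at x hx).1, fun x hx => (hW'at x hx).1,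
    fun x hx => (hPhase₁ x hx).1, fun x hx => (hPhase₂ x hx).1, ?_⟩
  rintro x (hx | hx)
  · rw [hσP x hx]
    exact (hPhase₁ x hx).2
  · rw [hσQ x hx]
    exact (hPhase₂ x hx).2

/-- If the field is uniform in phase 1 for the potential `V`, then the auxiliary
potentials `V'`, `W'` built from the flux potential `W` solve the conductivity
equation and together with `V` satisfy the attainability condition for the
translation upper bound (Theorem 4.1 of the paper). -/
theorem uniform_field_gives_upper_bound_attainability
    (Ω P : Set (EuclideanSpace ℝ (Fin 2)))
    (hΩ : IsOpen Ω) (hP : IsOpen P) (hPΩ : P ⊆ Ω)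
    (Q : Set (EuclideanSpace ℝ (Fin 2))) (hQ : Q = Ω \ closure P)
    (σ₁ σ₂ : ℝ) (hσ₂ : 0 < σ₂) (hσ : σ₂ < σ₁)
    (σ : EuclideanSpace ℝ (Fin 2) → ℝ)
    (hσP : ∀ x ∈ P, σ x = σ₁) (hσQ : ∀ x ∈ Q, σ x = σ₂)
    (V W : EuclideanSpace ℝ (Fin 2) → ℝ)
    (hVcont : ContinuousOn V Ω) (hWcont : ContinuousOn W Ω)
    (hVdiff : ∀ x ∈ P ∪ Q, DifferentiableAt ℝ V x)
    (hWdiff : ∀ x ∈ P ∪ Q, DifferentiableAt ℝ W x)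
    -- `σ₁ ∇V = σ₂ R⊥ ∇W` on `P`
    (hCRP : ∀ x ∈ P, σ₁ * gradient V x 0 = σ₂ * gradient W x 1 ∧
                     σ₁ * gradient V x 1 = -(σ₂ * gradient W x 0))
    -- `∇V = R⊥ ∇W` on `Q`
    (hCRQ : ∀ x ∈ Q, gradient V x 0 = gradient W x 1 ∧
                     gradient V x 1 = -(gradient W x 0))
    -- the field `-∇V` is uniform, equal to `(e₁, e₂)`, in phase 1
    (e₁ e₂ : ℝ)
    (hunif : ∀ x ∈ P, gradient V x 0 = -e₁ ∧ gradient V x 1 = -e₂)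
    (V' W' : EuclideanSpace ℝ (Fin 2) → ℝ)
    (hV' : ∀ p, V' p = -W p + (σ₁ / σ₂ + 1) * (e₂ * p 0 - e₁ * p 1))
    (hW' : ∀ p, W' p = V p + (σ₁ / σ₂ + 1) * (e₁ * p 0 + e₂ * p 1)) :
    ContinuousOn V' Ω ∧ ContinuousOn W' Ω ∧
    (∀ x ∈ P ∪ Q, DifferentiableAt ℝ V' x) ∧
    (∀ x ∈ P ∪ Q, DifferentiableAt ℝ W' x) ∧
    (∀ x ∈ P, σ₁ * gradient V' x 0 = σ₂ * gradient W' x 1 ∧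
              σ₁ * gradient V' x 1 = -(σ₂ * gradient W' x 0)) ∧
    (∀ x ∈ Q, gradient V' x 0 = gradient W' x 1 ∧
              gradient V' x 1 = -(gradient W' x 0)) ∧
    (∀ x ∈ P ∪ Q,
      (Lblock (σ x) σ₂).mulVec
        ![-(gradient V x 0), -(gradient V x 1), -(gradient V' x 0), -(gradient V' x 1)] =
      (σ₁ + σ₂) • ![e₁, e₂, -e₂, e₁]) :=
  uniform_field_gives_upper_bound_attainability_general Ω P Q σ₁ σ₂ hσ₂ σ hσP hσQ V W hVcont hWcont
    hVdiff hWdiff hCRP hCRQ e₁ e₂ hunif V' W' hV' hW'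
end
end

section
/- Let ε > 0, let A := {z ∈ ℂ : 1−ε < |z| < 1+ε}, and let F be analytic on A. Suppose: (a) F restricted to the unit circle {|z| = 1} is injective; (b) there exists δ > 0 such that F is injective on B(1,δ) ∩ A and injective on B(−1,δ) ∩ A, where B(a,δ) is the open disc of radius δ centered at a; and (c) F'(z) ≠ 0 for every z with |z| = 1 and z ≠ ±1. Then there exists ε₀ with 0 < ε₀ ≤ ε such that F is injective on the annulus {z ∈ ℂ : 1−ε₀ < |z| < 1+ε₀}. -/
/-!
An injective continuous map on a compact set which is injective near each of its points is
injective on a whole neighbourhood of it (`Set.InjOn.exists_mem_nhdsSet`). On the unit circle,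
local injectivity holds at `±1` by hypothesis and elsewhere by the inverse function theorem,
since `F' ≠ 0` there; and every neighbourhood of the circle contains a thin annulus.
-/

open Filter Metric Set Topology

theorem HasStrictDerivAt.exists_mem_nhds_injOn {𝕜 : Type*} [NontriviallyNormedField 𝕜]
    [CompleteSpace 𝕜] {f : 𝕜 → 𝕜} {f' a : 𝕜} (hf : HasStrictDerivAt f f' a) (hf' : f' ≠ 0) :
    ∃ u ∈ 𝓝 a, InjOn f u :=
  ⟨_, hf.eventually_left_inverse hf', LeftInvOn.injOn fun _ hx ↦ hx⟩

theorem isOpen_annulus {E : Type*} [SeminormedAddCommGroup E] (R r : ℝ) :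
    IsOpen {z : E | R - r < ‖z‖ ∧ ‖z‖ < R + r} :=
  isOpen_Ioo.preimage continuous_norm

section Annulus

variable {E : Type*} [NormedAddCommGroup E] [NormedSpace ℝ E]

theorem annulus_subset_thickening_sphere {R r : ℝ} (hr : r ≤ R) :
    {z : E | R - r < ‖z‖ ∧ ‖z‖ < R + r} ⊆ thickening r (sphere 0 R) := by
  rintro z ⟨hlo, hhi⟩
  have hz : 0 < ‖z‖ := by linarith
  have hR : 0 < R := by linarith
  refine mem_thickening_iff.2 ⟨(R / ‖z‖) • z, ?_, ?_⟩
  · rw [mem_sphere_zero_iff_norm, norm_smul, Real.norm_of_nonneg (by positivity),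
      div_mul_cancel₀ _ hz.ne']
  · calc dist z ((R / ‖z‖) • z) = ‖(1 - R / ‖z‖) • z‖ := by
          rw [dist_eq_norm, sub_smul, one_smul]
      _ = |‖z‖ - R| := by
          rw [norm_smul, Real.norm_eq_abs, ← abs_norm z, ← abs_mul, abs_norm, sub_mul,
            one_mul, div_mul_cancel₀ _ hz.ne']
      _ < r := abs_sub_lt_iff.2 ⟨by linarith, by linarith⟩

theorem exists_annulus_subset_of_mem_nhdsSet_sphere [ProperSpace E] {R : ℝ} (hR : 0 < R)
    {U : Set E} (hU : U ∈ 𝓝ˢ (sphere 0 R)) :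
    ∃ r > 0, {z : E | R - r < ‖z‖ ∧ ‖z‖ < R + r} ⊆ U := by
  obtain ⟨δ, hδ, hδU⟩ := (hasBasis_nhdsSet_thickening (isCompact_sphere 0 R)).mem_iff.1 hU
  refine ⟨min δ R, lt_min hδ hR, ?_⟩
  calc {z : E | R - min δ R < ‖z‖ ∧ ‖z‖ < R + min δ R}
      ⊆ thickening (min δ R) (sphere 0 R) := annulus_subset_thickening_sphere (min_le_right _ _)
    _ ⊆ thickening δ (sphere 0 R) := thickening_mono (min_le_left _ _) _
    _ ⊆ U := hδU

end Annulus

/-- Key step of the univalence lemma (Lemma 8.1 of the paper): an analytic function on an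
annulus around the unit circle which is injective on the circle, injective near `±1`, and has
nonvanishing derivative elsewhere on the circle, is injective on a thinner annulus. -/
theorem injective_on_thinner_annulus
    (ε : ℝ) (hε : 0 < ε)
    (F : ℂ → ℂ)
    (hF : DifferentiableOn ℂ F {z : ℂ | 1 - ε < ‖z‖ ∧ ‖z‖ < 1 + ε})
    (hcirc : Set.InjOn F {z : ℂ | ‖z‖ = 1})
    (hδ : ∃ δ > 0,
        Set.InjOn F (ball (1 : ℂ) δ ∩
          {z : ℂ | 1 - ε < ‖z‖ ∧ ‖z‖ < 1 + ε}) ∧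
        Set.InjOn F (ball (-1 : ℂ) δ ∩
          {z : ℂ | 1 - ε < ‖z‖ ∧ ‖z‖ < 1 + ε}))
    (hderiv : ∀ z : ℂ, ‖z‖ = 1 → z ≠ 1 → z ≠ -1 → deriv F z ≠ 0) :
    ∃ ε₀ : ℝ, 0 < ε₀ ∧ ε₀ ≤ ε ∧
      Set.InjOn F {z : ℂ | 1 - ε₀ < ‖z‖ ∧ ‖z‖ < 1 + ε₀} := by
  obtain ⟨δ, hδ, hinj_one, hinj_neg_one⟩ := hδ
  set A := {z : ℂ | 1 - ε < ‖z‖ ∧ ‖z‖ < 1 + ε}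
  have hA : ∀ z ∈ sphere (0 : ℂ) 1, A ∈ 𝓝 z := fun z hz ↦
    (isOpen_annulus 1 ε).mem_nhds <| by
      rw [mem_sphere_zero_iff_norm] at hz
      exact ⟨by linarith, by linarith⟩
  have hloc : ∀ z ∈ sphere (0 : ℂ) 1, ∃ u ∈ 𝓝 z, InjOn F u := by
    intro z hz
    obtain rfl | hne_one := eq_or_ne z 1
    · exact ⟨_, inter_mem (ball_mem_nhds _ hδ) (hA _ hz), hinj_one⟩
    obtain rfl | hne_neg_one := eq_or_ne z (-1)
    · exact ⟨_, inter_mem (ball_mem_nhds _ hδ) (hA _ hz), hinj_neg_one⟩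
    exact (hF.analyticAt (hA z hz)).hasStrictDerivAt.exists_mem_nhds_injOn
      (hderiv z (mem_sphere_zero_iff_norm.1 hz) hne_one hne_neg_one)
  obtain ⟨U, hU, hinj⟩ := InjOn.exists_mem_nhdsSet
    (hcirc.mono fun z hz ↦ mem_sphere_zero_iff_norm.1 hz) (isCompact_sphere 0 1)
    (fun z hz ↦ (hF.differentiableAt (hA z hz)).continuousAt) hloc
  obtain ⟨r, hr, hrU⟩ := exists_annulus_subset_of_mem_nhdsSet_sphere one_pos hU
  refine ⟨min ε r, lt_min hε hr, min_le_left _ _, hinj.mono fun z hz ↦ hrU ?_⟩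
  have hmin_le := min_le_right ε r
  exact ⟨by linarith [hz.1], by linarith [hz.2]⟩
end

section
/- Let M be a real symmetric 2×2 matrix and σ₁ > σ₂ > 0. For t ∈ ℝ define the 2×2 matrix N(t) := σ₂⁻¹I₂ − tσ₂⁻²M and φ(t) := (Tr N(t) − 2/σ₁)/(det N(t) − 1/σ₁²). Then φ is defined in a neighborhood of t = 0, φ(0) = 2σ₁σ₂/(σ₁+σ₂), and lim_{t→0} (1/t)·((σ₁+σ₂)/(σ₁(σ₁−σ₂)))·( φ(t) − 2σ₁σ₂/(σ₁+σ₂) ) = σ₁·Tr M/(σ₁² − σ₂²). -/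
/-!
Trace and determinant of `N t` are polynomials in `t`, and `det (N 0) - 1 / σ₁ ^ 2 > 0` because
`σ₂ < σ₁`. Hence `φ` is differentiable at `0`, and the limit is `φ'(0)` (quotient rule) times the
constant factor in front of the difference quotient.
-/

open Matrix Filter

noncomputable section

namespace Matrix

variable {R : Type*} [CommRing R]

theorem trace_smul_one_sub_smul {n : Type*} [Fintype n] [DecidableEq n]
    (a b : R) (A : Matrix n n R) :
    trace (a • 1 - b • A) = Fintype.card n * a - b * trace A := by
  rw [trace_sub, trace_smul, trace_smul, trace_one, smul_eq_mul, smul_eq_mul, mul_comm a]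

theorem det_fin_two_smul_one_sub_smul (a b : R) (A : Matrix (Fin 2) (Fin 2) R) :
    det (a • 1 - b • A) = a ^ 2 - a * b * trace A + b ^ 2 * det A := by
  simp only [det_fin_two, trace_fin_two, sub_apply, smul_apply, one_apply, smul_eq_mul]
  simp only [Fin.isValue, ↓reduceIte, Fin.reduceEq, mul_one, mul_zero]
  ring

end Matrix

section Pencil

variable (a b : ℝ) (A : Matrix (Fin 2) (Fin 2) ℝ)

theorem hasDerivAt_trace_smul_one_sub_smul (t : ℝ) :
    HasDerivAt (fun t ↦ trace (a • 1 - (t * b) • A)) (-(b * trace A)) t := by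
  simp_rw [trace_smul_one_sub_smul, mul_assoc]
  simpa using ((hasDerivAt_id t).mul_const (b * trace A)).const_sub _

theorem hasDerivAt_det_fin_two_smul_one_sub_smul_zero :
    HasDerivAt (fun t ↦ det (a • 1 - (t * b) • A)) (-(a * b * trace A)) 0 := by
  have h := (((hasDerivAt_id (0 : ℝ)).const_mul (a * b * trace A)).const_sub (a ^ 2)).add
    ((hasDerivAt_pow 2 (0 : ℝ)).const_mul (b ^ 2 * det A))
  refine (h.congr_of_eventuallyEq (Eventually.of_forall fun t ↦ ?_)).congr_deriv (by simp)
  simp only [det_fin_two_smul_one_sub_smul, Pi.add_apply, id]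
  ring

theorem trace_sub_div_det_sub_smul_one_sub_zero_smul (p q : ℝ) :
    (trace (a • 1 - (0 * b) • A) - p) / (det (a • 1 - (0 * b) • A) - q) =
      (2 * a - p) / (a ^ 2 - q) := by
  rw [trace_smul_one_sub_smul, det_fin_two_smul_one_sub_smul, Fintype.card_fin]
  push_cast
  ring

theorem hasDerivAt_trace_sub_div_det_sub_zero (p q : ℝ) (hq : a ^ 2 ≠ q) :
    HasDerivAt
      (fun t ↦ (trace (a • 1 - (t * b) • A) - p) / (det (a • 1 - (t * b) • A) - q))
      (b * trace A * (a * (2 * a - p) - (a ^ 2 - q)) / (a ^ 2 - q) ^ 2) 0 := by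
  refine (((hasDerivAt_trace_smul_one_sub_smul a b A 0).sub_const p).div
    ((hasDerivAt_det_fin_two_smul_one_sub_smul_zero a b A).sub_const q)
    (by simpa [sub_eq_zero] using hq)).congr_deriv ?_
  rw [trace_smul_one_sub_smul, det_fin_two_smul_one_sub_smul, Fintype.card_fin]
  push_cast
  ring

end Pencil

theorem lower_bound_small_volume_asymptotics_general
    (M : Matrix (Fin 2) (Fin 2) ℝ)
    (σ₁ σ₂ : ℝ) (hσ₂ : 0 < σ₂) (hσ : σ₂ < σ₁)
    (N : ℝ → Matrix (Fin 2) (Fin 2) ℝ)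
    (hN : ∀ t, N t = σ₂⁻¹ • (1 : Matrix (Fin 2) (Fin 2) ℝ) - (t * (σ₂ ^ 2)⁻¹) • M)
    (φ : ℝ → ℝ)
    (hφ : ∀ t, φ t = ((N t).trace - 2 / σ₁) / ((N t).det - 1 / σ₁ ^ 2)) :
    (∃ δ > 0, ∀ t : ℝ, |t| < δ → (N t).det - 1 / σ₁ ^ 2 ≠ 0) ∧
    φ 0 = 2 * σ₁ * σ₂ / (σ₁ + σ₂) ∧
    Tendsto (fun t =>
        (1 / t) * ((σ₁ + σ₂) / (σ₁ * (σ₁ - σ₂))) * (φ t - 2 * σ₁ * σ₂ / (σ₁ + σ₂)))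
      (nhdsWithin 0 {0}ᶜ)
      (nhds (σ₁ * M.trace / (σ₁ ^ 2 - σ₂ ^ 2))) := by
  have hσ₁ : 0 < σ₁ := hσ₂.trans hσ
  have hσ₁_ne : σ₁ ≠ 0 := hσ₁.ne'
  have hσ₂_ne : σ₂ ≠ 0 := hσ₂.ne'
  have hsq_ne : σ₁ ^ 2 - σ₂ ^ 2 ≠ 0 := by nlinarith
  have hsub_ne : σ₁ - σ₂ ≠ 0 := by linarith
  have hu0 : 2 * σ₂⁻¹ - 2 / σ₁ = 2 * (σ₁ - σ₂) / (σ₁ * σ₂) := by field_simp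
  have hv0 : σ₂⁻¹ ^ 2 - 1 / σ₁ ^ 2 = (σ₁ ^ 2 - σ₂ ^ 2) / (σ₁ ^ 2 * σ₂ ^ 2) := by field_simp
  have hv0_ne : σ₂⁻¹ ^ 2 - 1 / σ₁ ^ 2 ≠ 0 := by
    rw [hv0]; exact div_ne_zero hsq_ne (by positivity)
  have hφ0 : φ 0 = 2 * σ₁ * σ₂ / (σ₁ + σ₂) := by
    rw [hφ, hN, trace_sub_div_det_sub_smul_one_sub_zero_smul, hu0, hv0]
    field_simp
    ring
  have hφ_deriv := hasDerivAt_trace_sub_div_det_sub_zero σ₂⁻¹ (σ₂ ^ 2)⁻¹ M (2 / σ₁) _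
    (sub_ne_zero.1 hv0_ne)
  have hφ_eq : (fun t ↦ (trace (σ₂⁻¹ • 1 - (t * (σ₂ ^ 2)⁻¹) • M) - 2 / σ₁) /
      (det (σ₂⁻¹ • 1 - (t * (σ₂ ^ 2)⁻¹) • M) - 1 / σ₁ ^ 2)) = φ :=
    funext fun t ↦ by rw [hφ, hN]
  rw [hu0, hv0, hφ_eq] at hφ_deriv
  refine ⟨?_, hφ0, ?_⟩
  · have hdet := ((hasDerivAt_det_fin_two_smul_one_sub_smul_zero σ₂⁻¹ (σ₂ ^ 2)⁻¹ M).sub_const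
      (1 / σ₁ ^ 2)).continuousAt.eventually_ne (by simpa using hv0_ne)
    obtain ⟨δ, hδ, hball⟩ := Metric.eventually_nhds_iff.1 hdet
    exact ⟨δ, hδ, fun t ht ↦ by rw [hN]; exact hball (by simpa [Real.dist_eq] using ht)⟩
  · convert (hφ_deriv.tendsto_slope_zero).const_mul ((σ₁ + σ₂) / (σ₁ * (σ₁ - σ₂))) using 2
    · rw [zero_add, hφ0, smul_eq_mul]; ring
    · field_simp
      ring

/-- Small-volume-fraction asymptotic expansion of the translation lower bound, giving the
Capdeboscq–Vogelius lower bound (formulas (6.19)–(6.20) of the paper). -/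
theorem lower_bound_small_volume_asymptotics
    (M : Matrix (Fin 2) (Fin 2) ℝ) (hMsymm : M.IsSymm)
    (σ₁ σ₂ : ℝ) (hσ₂ : 0 < σ₂) (hσ : σ₂ < σ₁)
    (N : ℝ → Matrix (Fin 2) (Fin 2) ℝ)
    (hN : ∀ t, N t = σ₂⁻¹ • (1 : Matrix (Fin 2) (Fin 2) ℝ) - (t * (σ₂ ^ 2)⁻¹) • M)
    (φ : ℝ → ℝ)
    (hφ : ∀ t, φ t = ((N t).trace - 2 / σ₁) / ((N t).det - 1 / σ₁ ^ 2)) :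
    (∃ δ > 0, ∀ t : ℝ, |t| < δ → (N t).det - 1 / σ₁ ^ 2 ≠ 0) ∧
    φ 0 = 2 * σ₁ * σ₂ / (σ₁ + σ₂) ∧
    Tendsto (fun t =>
        (1 / t) * ((σ₁ + σ₂) / (σ₁ * (σ₁ - σ₂))) * (φ t - 2 * σ₁ * σ₂ / (σ₁ + σ₂)))
      (nhdsWithin 0 {0}ᶜ)
      (nhds (σ₁ * M.trace / (σ₁ ^ 2 - σ₂ ^ 2))) :=
  lower_bound_small_volume_asymptotics_general M σ₁ σ₂ hσ₂ hσ N hN φ hφ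
end
end
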